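/- The selection risk measure ρ_{s,0} is a set-valued coherent risk measure: for all set-valued portfolios 𝐗, 𝐘 possessing p-integrable selections, (i) ρ_{s,0}(𝐗) is a convex upper set (x ∈ ρ_{s,0}(𝐗) and y ≥ x coordinatewise imply y ∈ ρ_{s,0}(𝐗)); (ii) ρ_{s,0}(𝐗 + a) = ρ_{s,0}(𝐗) − a for every a ∈ ℝ^d; (iii) if 𝐗(ω) ⊆ 𝐘(ω) a.s. then ρ_{s,0}(𝐗) ⊆ ρ_{s,0}(𝐘); (iv) ρ_{s,0}(c𝐗) = c·ρ_{s,0}(𝐗) for every c > 0; (v) ρ_{s,0}(𝐗 ⊞ 𝐘) ⊇ ρ_{s,0}(𝐗) + ρ_{s,0}(𝐘), where 𝐗 ⊞ 𝐘 is the closed sum ω ↦ cl(𝐗(ω) + 𝐘(ω)). -/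

import Mathlib

/-!
The acceptance set `{ξ ∈ L^p : r ξ ≤ 0}` of a coherent risk measure is a convex cone that is
stable under increases. Each property of `ρ_{s,0}` follows by transforming acceptable
selections accordingly: convex combinations, positive multiples, translates and sums of
selections are selections of the correspondingly transformed portfolios.
-/

open MeasureTheory Set Filter
open scoped Pointwise ENNReal RealInnerProductSpace

noncomputable section

/-- `ℝ^d` with the Euclidean norm. -/
abbrev Vec (d : ℕ) := EuclideanSpace ℝ (Fin d)

/-- Effros measurability of a set-valued map: `{ω : X(ω) ∩ G ≠ ∅}` is measurable
for every open `G`. -/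
def EffrosMeasurable {Ω : Type*} [MeasurableSpace Ω] {d : ℕ} (X : Ω → Set (Vec d)) : Prop :=
  ∀ G : Set (Vec d), IsOpen G → MeasurableSet {ω | (X ω ∩ G).Nonempty}

/-- A set-valued portfolio: an Effros-measurable map with nonempty closed convex
lower-set values. -/
structure IsPortfolio {Ω : Type*} [MeasurableSpace Ω] {d : ℕ} (X : Ω → Set (Vec d)) : Prop where
  effros : EffrosMeasurable X
  nonempty : ∀ ω, (X ω).Nonempty
  isClosed : ∀ ω, IsClosed (X ω)
  convex : ∀ ω, Convex ℝ (X ω)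
  lower : ∀ ω, ∀ x ∈ X ω, ∀ y : Vec d, (∀ i, y i ≤ x i) → y ∈ X ω

/-- A coherent risk measure on `L^p(Ω; ℝ)` with values in `ℝ ∪ {+∞} ⊆ EReal`:
monotone (antitone in the gain), cash invariant, subadditive and positively homogeneous. -/
structure IsCoherent {Ω : Type*} [MeasurableSpace Ω] (μ : Measure Ω) (p : ℝ≥0∞)
    (r : (Ω → ℝ) → EReal) : Prop where
  ne_bot : ∀ ξ : Ω → ℝ, MemLp ξ p μ → r ξ ≠ ⊥
  mono : ∀ ξ η : Ω → ℝ, MemLp ξ p μ → MemLp η p μ → (∀ᵐ ω ∂μ, ξ ω ≤ η ω) → r η ≤ r ξ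
  cash : ∀ ξ : Ω → ℝ, MemLp ξ p μ → ∀ c : ℝ, r (fun ω => ξ ω + c) = r ξ - (c : EReal)
  subadd : ∀ ξ η : Ω → ℝ, MemLp ξ p μ → MemLp η p μ →
    r (fun ω => ξ ω + η ω) ≤ r ξ + r η
  homog : ∀ ξ : Ω → ℝ, MemLp ξ p μ → ∀ c : ℝ, 0 < c →
    r (fun ω => c * ξ ω) = (c : EReal) * r ξ

/-- The selection risk measure `ρ_{s,0}(𝐗)`: the set of deterministic `x ∈ ℝ^d`
for which `𝐗 + x` has a selection with all individually acceptable components. -/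
def rho0 {Ω : Type*} [MeasurableSpace Ω] (μ : Measure Ω) (p : ℝ≥0∞) {d : ℕ}
    (r : Fin d → (Ω → ℝ) → EReal) (X : Ω → Set (Vec d)) : Set (Vec d) :=
  {x | ∃ ξ : Ω → Vec d, MemLp ξ p μ ∧ (∀ᵐ ω ∂μ, ξ ω ∈ X ω) ∧
        ∀ i, r i (fun ω => ξ ω i + x i) ≤ 0}

section SelectionRiskMeasure

variable {Ω : Type*} [MeasurableSpace Ω] {μ : Measure Ω} {p : ℝ≥0∞} {d : ℕ}

namespace IsCoherent

variable {r : (Ω → ℝ) → EReal} {ξ η : Ω → ℝ}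

theorem mul_nonpos (hr : IsCoherent μ p r) (hξ : MemLp ξ p μ) (h : r ξ ≤ 0) {c : ℝ}
    (hc : 0 < c) : r (fun ω => c * ξ ω) ≤ 0 := by
  rw [hr.homog ξ hξ c hc]
  exact EReal.mul_nonpos_iff.2 (.inl ⟨EReal.coe_nonneg.2 hc.le, h⟩)

theorem add_nonpos (hr : IsCoherent μ p r) (hξ : MemLp ξ p μ) (hη : MemLp η p μ)
    (hrξ : r ξ ≤ 0) (hrη : r η ≤ 0) : r (fun ω => ξ ω + η ω) ≤ 0 :=
  (hr.subadd ξ η hξ hη).trans (_root_.add_nonpos hrξ hrη)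

end IsCoherent

theorem MeasureTheory.MemLp.apply_add_const [IsFiniteMeasure μ] {ξ : Ω → Vec d}
    (hξ : MemLp ξ p μ) (i : Fin d) (c : ℝ) : MemLp (fun ω => ξ ω i + c) p μ :=
  ((EuclideanSpace.proj i : Vec d →L[ℝ] ℝ).comp_memLp' hξ).add (memLp_const c)

variable {r : Fin d → (Ω → ℝ) → EReal} {X Y : Ω → Set (Vec d)} {x y : Vec d}

theorem convex_rho0 [IsFiniteMeasure μ] (hr : ∀ i, IsCoherent μ p (r i))
    (hX : ∀ ω, Convex ℝ (X ω)) : Convex ℝ (rho0 μ p r X) := by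
  refine convex_iff_forall_pos.2 fun x hx y hy a b ha hb hab => ?_
  obtain ⟨ξ, hξ, hξX, hξr⟩ := hx
  obtain ⟨η, hη, hηX, hηr⟩ := hy
  refine ⟨fun ω => a • ξ ω + b • η ω, (hξ.const_smul a).add (hη.const_smul b),
    (hξX.and hηX).mono fun ω h => hX ω h.1 h.2 ha.le hb.le hab, fun i => ?_⟩
  have hcomb : (fun ω => (a • ξ ω + b • η ω) i + (a • x + b • y) i)
      = fun ω => a * (ξ ω i + x i) + b * (η ω i + y i) := by
    funext ω
    simp only [PiLp.add_apply, PiLp.smul_apply, smul_eq_mul]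
    ring
  rw [hcomb]
  exact (hr i).add_nonpos ((hξ.apply_add_const i (x i)).const_mul a)
    ((hη.apply_add_const i (y i)).const_mul b)
    ((hr i).mul_nonpos (hξ.apply_add_const i (x i)) (hξr i) ha)
    ((hr i).mul_nonpos (hη.apply_add_const i (y i)) (hηr i) hb)

theorem mem_rho0_of_le [IsFiniteMeasure μ] (hr : ∀ i, IsCoherent μ p (r i))
    (hx : x ∈ rho0 μ p r X) (hxy : ∀ i, x i ≤ y i) : y ∈ rho0 μ p r X := by
  obtain ⟨ξ, hξ, hξX, hξr⟩ := hx
  exact ⟨ξ, hξ, hξX, fun i => ((hr i).mono _ _ (hξ.apply_add_const i (x i))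
    (hξ.apply_add_const i (y i)) (ae_of_all _ fun ω => by linarith [hxy i])).trans (hξr i)⟩

theorem sub_mem_rho0_image_add [IsFiniteMeasure μ] (hx : x ∈ rho0 μ p r X) (a : Vec d) :
    x - a ∈ rho0 μ p r (fun ω => (· + a) '' X ω) := by
  obtain ⟨ξ, hξ, hξX, hξr⟩ := hx
  refine ⟨fun ω => ξ ω + a, hξ.add (memLp_const a), hξX.mono fun ω h => ⟨ξ ω, h, rfl⟩,
    fun i => ?_⟩
  simpa only [PiLp.add_apply, PiLp.sub_apply, add_add_sub_cancel] using hξr i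

theorem rho0_image_add [IsFiniteMeasure μ] (a : Vec d) :
    rho0 μ p r (fun ω => (· + a) '' X ω) = (fun x => x - a) '' rho0 μ p r X := by
  ext x
  constructor
  · intro hx
    refine ⟨x + a, ?_, add_sub_cancel_right x a⟩
    simpa only [Set.image_image, add_neg_cancel_right, Set.image_id', sub_neg_eq_add] using
      sub_mem_rho0_image_add hx (-a)
  · rintro ⟨y, hy, rfl⟩
    exact sub_mem_rho0_image_add hy a

theorem rho0_mono (h : ∀ᵐ ω ∂μ, X ω ⊆ Y ω) : rho0 μ p r X ⊆ rho0 μ p r Y := by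
  rintro x ⟨ξ, hξ, hξX, hξr⟩
  exact ⟨ξ, hξ, (hξX.and h).mono fun ω h => h.2 h.1, hξr⟩

theorem smul_mem_rho0 [IsFiniteMeasure μ] (hr : ∀ i, IsCoherent μ p (r i)) {c : ℝ}
    (hc : 0 < c) (hx : x ∈ rho0 μ p r X) : c • x ∈ rho0 μ p r (fun ω => c • X ω) := by
  obtain ⟨ξ, hξ, hξX, hξr⟩ := hx
  refine ⟨fun ω => c • ξ ω, hξ.const_smul c, hξX.mono fun ω h => smul_mem_smul_set h,
    fun i => ?_⟩
  have hscale : (fun ω => (c • ξ ω) i + (c • x) i) = fun ω => c * (ξ ω i + x i) := by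
    funext ω
    simp only [PiLp.smul_apply, smul_eq_mul]
    ring
  rw [hscale]
  exact (hr i).mul_nonpos (hξ.apply_add_const i (x i)) (hξr i) hc

theorem rho0_smul [IsFiniteMeasure μ] (hr : ∀ i, IsCoherent μ p (r i)) {c : ℝ} (hc : 0 < c) :
    rho0 μ p r (fun ω => c • X ω) = c • rho0 μ p r X := by
  ext x
  constructor
  · intro hx
    refine ⟨c⁻¹ • x, ?_, smul_inv_smul₀ hc.ne' x⟩
    simpa [inv_smul_smul₀ hc.ne'] using smul_mem_rho0 hr (inv_pos.2 hc) hx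
  · rintro ⟨y, hy, rfl⟩
    exact smul_mem_rho0 hr hc hy

theorem add_subset_rho0_add [IsFiniteMeasure μ] (hr : ∀ i, IsCoherent μ p (r i)) :
    rho0 μ p r X + rho0 μ p r Y ⊆ rho0 μ p r (fun ω => X ω + Y ω) := by
  rintro z ⟨x, ⟨ξ, hξ, hξX, hξr⟩, y, ⟨η, hη, hηY, hηr⟩, rfl⟩
  refine ⟨fun ω => ξ ω + η ω, hξ.add hη,
    (hξX.and hηY).mono fun ω h => add_mem_add h.1 h.2, fun i => ?_⟩
  have hsplit : (fun ω => (ξ ω + η ω) i + (x + y) i)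
      = fun ω => (ξ ω i + x i) + (η ω i + y i) := by
    funext ω
    simp only [PiLp.add_apply]
    ring
  rw [hsplit]
  exact (hr i).add_nonpos (hξ.apply_add_const i (x i)) (hη.apply_add_const i (y i))
    (hξr i) (hηr i)

end SelectionRiskMeasure

theorem statement2 {Ω : Type*} [MeasurableSpace Ω] (μ : Measure Ω) [IsProbabilityMeasure μ]
    {d : ℕ} (p : ℝ≥0∞)
    (r : Fin d → (Ω → ℝ) → EReal) (hr : ∀ i, IsCoherent μ p (r i))
    (X Y : Ω → Set (Vec d)) (hX : IsPortfolio X) :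
    -- (i) convex upper values
    (Convex ℝ (rho0 μ p r X) ∧
      ∀ x ∈ rho0 μ p r X, ∀ y : Vec d, (∀ i, x i ≤ y i) → y ∈ rho0 μ p r X) ∧
    -- (ii) cash invariance
    (∀ a : Vec d,
      rho0 μ p r (fun ω => (· + a) '' X ω) = (fun x => x - a) '' rho0 μ p r X) ∧
    -- (iii) monotonicity
    ((∀ᵐ ω ∂μ, X ω ⊆ Y ω) → rho0 μ p r X ⊆ rho0 μ p r Y) ∧
    -- (iv) homogeneity
    (∀ c : ℝ, 0 < c → rho0 μ p r (fun ω => c • X ω) = c • rho0 μ p r X) ∧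
    -- (v) subadditivity with respect to the closed sum
    rho0 μ p r X + rho0 μ p r Y ⊆ rho0 μ p r (fun ω => closure (X ω + Y ω)) :=
  ⟨⟨convex_rho0 hr hX.convex, fun _ hx _ hxy => mem_rho0_of_le hr hx hxy⟩,
    rho0_image_add, rho0_mono, fun _ hc => rho0_smul hr hc,
    (add_subset_rho0_add hr).trans (rho0_mono (ae_of_all _ fun _ => subset_closure))⟩
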